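/- arXiv:2004.06285 — 2 statements merged into one kernel-verified Lean document; each statement's English description precedes it below -/
import Mathlib

section
/- Let G be a nontrivial connected simple graph of order n, and write m_G(x,y) for the number of common neighbors of x and y. Then rvd(G) = n−1 if and only if the following three conditions hold. (1) There exists a pair of distinct vertices x, y with m_G(x,y) ≤ 1. (2) For any two disjoint pairs {x,y} and {p,q} of distinct vertices with m_G(x,y) ≤ 1 and m_G(p,q) ≤ 1, after possibly swapping x with y and/or p with q, G contains one of the following configurations on {x,y,p,q}: (i) two further vertices u, v ∉ {x,y,p,q} together with the edges ux, xv, up, pv, uy, yq, qv (three internally disjoint u–v paths u-x-v, u-p-v and u-y-q-v), or (ii) the edges xp, xy, yp, xq, qp (x adjacent to p, and each of y and q adjacent to both x and p). (3) For any three pairwise distinct vertices x, y, z with m_G(x,y) ≤ 1, m_G(x,z) ≤ 1 and m_G(y,z) ≤ 1, G contains one of the following configurations on {x,y,z}: (iii) the triangle on x, y, z, or (iv) two further vertices u, v ∉ {x,y,z} and a labeling {a,b,c} = {x,y,z} together with the edges ua, av, ub, bc, cv (two internally disjoint u–v paths u-a-v and u-b-c-v). -/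
open SimpleGraph

/-- The graph obtained from `G` by removing (isolating) the vertices of `S`.
Since in our uses the endpoints of interest never lie in `S`, reachability
between them in this graph agrees with reachability in `G - S`. -/
def SimpleGraph.delVerts {V : Type*} (G : SimpleGraph V) (S : Set V) : SimpleGraph V where
  Adj u v := G.Adj u v ∧ u ∉ S ∧ v ∉ S
  symm := ⟨fun u v h => ⟨h.1.symm, h.2.2, h.2.1⟩⟩
  loopless := ⟨fun v h => G.irrefl h.1⟩

/-- `c` is a rainbow vertex-disconnection coloring of `G`: every two distinct
vertices `x, y` admit an `x`-`y` rainbow vertex-cut. -/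
def SimpleGraph.IsRVDColoring {V α : Type*} (G : SimpleGraph V) (c : V → α) : Prop :=
  ∀ x y : V, x ≠ y → ∃ S : Set V, x ∉ S ∧ y ∉ S ∧
    (¬ G.Adj x y → ¬ (G.delVerts S).Reachable x y ∧ Set.InjOn c S) ∧
    (G.Adj x y → ¬ ((G.deleteEdges {s(x, y)}).delVerts S).Reachable x y ∧
      (Set.InjOn c (S ∪ {x}) ∨ Set.InjOn c (S ∪ {y})))

/-- The rainbow vertex-disconnection number of `G`: the minimum number of colors
in a rainbow vertex-disconnection coloring of `G`. -/
noncomputable def SimpleGraph.rvd {V : Type*} (G : SimpleGraph V) : ℕ :=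
  sInf {k | ∃ c : V → Fin k, G.IsRVDColoring c}

/-- The number of common neighbors of `x` and `y` in `G`. -/
noncomputable def SimpleGraph.mCommon {V : Type*} (G : SimpleGraph V) (x y : V) : ℕ :=
  {w | G.Adj x w ∧ G.Adj y w}.ncard

/-- Configuration (i): two vertices `u, v` outside `{x,y,p,q}` together with
three internally disjoint `u`-`v` paths `u-x-v`, `u-p-v` and `u-y-q-v`. -/
def SimpleGraph.ConfigI {V : Type*} (G : SimpleGraph V) (x y p q : V) : Prop :=
  ∃ u v : V, u ≠ v ∧ u ∉ ({x, y, p, q} : Set V) ∧ v ∉ ({x, y, p, q} : Set V) ∧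
    G.Adj u x ∧ G.Adj x v ∧ G.Adj u p ∧ G.Adj p v ∧ G.Adj u y ∧ G.Adj y q ∧ G.Adj q v

/-- Configuration (ii): `x` adjacent to `p`, and each of `y` and `q` adjacent
to both `x` and `p`. -/
def SimpleGraph.ConfigII {V : Type*} (G : SimpleGraph V) (x y p q : V) : Prop :=
  G.Adj x p ∧ G.Adj x y ∧ G.Adj y p ∧ G.Adj x q ∧ G.Adj q p

/-- Configuration (iv): two vertices `u, v` outside `{x,y,z}` and a labeling
`{a,b,c} = {x,y,z}` with two internally disjoint `u`-`v` paths `u-a-v` and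
`u-b-c-v`. -/
def SimpleGraph.ConfigIV {V : Type*} (G : SimpleGraph V) (x y z : V) : Prop :=
  ∃ u v a b c : V, u ≠ v ∧ u ∉ ({x, y, z} : Set V) ∧ v ∉ ({x, y, z} : Set V) ∧
    [a, b, c].Perm [x, y, z] ∧
    G.Adj u a ∧ G.Adj a v ∧ G.Adj u b ∧ G.Adj b c ∧ G.Adj c v


/-!
If `c` is a rainbow vertex-disconnection colouring and `c u = c v` for `u ≠ v`, then `u` and `v`
have at most one common neighbour: two common neighbours `w, w'` would put both `u` and `v` into
every `w`–`w'` cut, which has to be rainbow. In the same way a triangle or configuration (iv) on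
a colour class of size three, and configurations (i) or (ii) on two colour classes of size two,
force two vertices of one colour into a cut that has to be rainbow. A colouring with at most
`n - 2` colours has a colour class of size three or two classes of size two, which gives the lower
bounds.

Conversely, merging the colours of a pair with at most one common neighbour leaves `n - 1`
colours, and merging a triple violating (3), or two pairs violating (2), leaves `n - 2`. These
colourings work because every pair `a, b` is separated by the cut of all vertices except `a`, `b`
and at most two vertices `w₁, w₂` of the merged classes, chosen so that no `a`–`b` path runs inside
`{a, b, w₁, w₂}`.
-/

namespace Set

variable {α β : Type*} {a b w x y : α}

lemma injOn_compl_of_merged {c : α → β} {A B R : Set α}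
    (hc : ∀ u v, c u = c v → u = v ∨ u ∈ A ∧ v ∈ A ∨ u ∈ B ∧ v ∈ B)
    (hA : (A \ R).Subsingleton) (hB : (B \ R).Subsingleton) : InjOn c Rᶜ := by
  intro u hu v hv huv
  rcases hc u v huv with h | ⟨hu', hv'⟩ | ⟨hu', hv'⟩
  · exact h
  · exact hA ⟨hu', hu⟩ ⟨hv', hv⟩
  · exact hB ⟨hu', hu⟩ ⟨hv', hv⟩

lemma subsingleton_pair_sdiff {R : Set α} (hw : w ∈ ({x, y} : Set α)) (hwR : w ∈ R) :
    ({x, y} \ R).Subsingleton := by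
  rintro u ⟨rfl | rfl, hu⟩ v ⟨rfl | rfl, hv⟩ <;> rcases hw with rfl | rfl <;> tauto

lemma exists_sdiff_pair_eq_singleton {T : Set α} (hT : T.ncard = 3) (ha : a ∈ T) (hb : b ∈ T)
    (hab : a ≠ b) : ∃ w, T \ {a, b} = {w} := by
  rw [← ncard_eq_one, ncard_sdiff (insert_subset_iff.mpr ⟨ha, singleton_subset_iff.mpr hb⟩), hT,
    ncard_pair hab]

lemma subsingleton_sdiff_of_ncard_eq_three {T R : Set α} (hT : T.ncard = 3) (ha : a ∈ T)
    (hb : b ∈ T) (hab : a ≠ b) (haR : a ∈ R) (hbR : b ∈ R) : (T \ R).Subsingleton := by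
  obtain ⟨w, hw⟩ := exists_sdiff_pair_eq_singleton hT ha hb hab
  exact subsingleton_singleton.anti
    (hw ▸ sdiff_subset_sdiff_right (insert_subset_iff.mpr ⟨haR, singleton_subset_iff.mpr hbR⟩))

lemma ncard_range_le_card_sub [Fintype α] {f : β → α} {T : Set α} (hf : ∀ v, f v ∉ T) :
    (range f).ncard ≤ Fintype.card α - T.ncard := by
  have h₁ := ncard_add_ncard_compl T
  have h₂ := ncard_le_ncard (t := Tᶜ) (range_subset_iff.mpr hf)
  rw [Nat.card_eq_fintype_card] at h₁
  omega

lemma exists_mate_of_mem_pair (hxy : x ≠ y) (ha : a ∈ ({x, y} : Set α)) :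
    ∃ a' ∈ ({x, y} : Set α), a' ≠ a ∧ ((a = x ∧ a' = y) ∨ (a = y ∧ a' = x)) := by
  rcases ha with rfl | rfl
  · exact ⟨y, by simp, Ne.symm hxy, .inl ⟨rfl, rfl⟩⟩
  · exact ⟨x, by simp, hxy, .inr ⟨rfl, rfl⟩⟩

end Set

namespace Fintype

lemma exists_triple_or_two_pairs {α β : Type*} [Fintype α] [Fintype β] (c : α → β)
    (hcard : card β + 2 ≤ card α) :
    (∃ x y z, x ≠ y ∧ x ≠ z ∧ y ≠ z ∧ c x = c y ∧ c x = c z) ∨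
      ∃ x y p q, x ≠ y ∧ p ≠ q ∧ c x = c y ∧ c p = c q ∧ c x ≠ c p := by
  classical
  obtain ⟨x, y, hxy, hc⟩ := exists_ne_map_eq_of_card_lt c (by omega)
  obtain ⟨⟨u, hu⟩, ⟨v, hv⟩, huv, hc'⟩ :=
    exists_ne_map_eq_of_card_lt (fun v : {v // v ≠ y} ↦ c v)
      (by simp only [ne_eq, card_subtype_compl, card_unique]; omega)
  simp only [ne_eq, Subtype.mk.injEq] at huv hc'
  by_cases hcu : c x = c u
  · exact .inl ⟨y, u, v, Ne.symm hu, Ne.symm hv, huv, hc.symm.trans hcu,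
      hc.symm.trans (hcu.trans hc')⟩
  · exact .inr ⟨x, y, u, v, hxy, huv, hc, hc', hcu⟩

end Fintype

namespace SimpleGraph

variable {V α β : Type*} {G : SimpleGraph V} {c : V → α} {a b u v w w₁ w₂ x y z p q : V}

lemma mCommon_eq_ncard (x y : V) : G.mCommon x y = (G.commonNeighbors x y).ncard := rfl

lemma mCommon_comm (x y : V) : G.mCommon x y = G.mCommon y x := by
  rw [mCommon_eq_ncard, mCommon_eq_ncard, commonNeighbors_symm]

lemma eq_of_mCommon_le_one [Finite V] (h : G.mCommon x y ≤ 1)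
    (hu : u ∈ G.commonNeighbors x y) (hv : v ∈ G.commonNeighbors x y) : u = v :=
  Set.ncard_le_one_iff_subsingleton.mp h hu hv

lemma eq_of_mem_commonNeighbors [Finite V] (h : G.mCommon u v ≤ 1)
    (hu : u ∈ G.commonNeighbors a b) (hv : v ∈ G.commonNeighbors a b) : a = b := by
  rw [mem_commonNeighbors] at hu hv
  exact eq_of_mCommon_le_one h (by simp [mem_commonNeighbors, hu.1.symm, hv.1.symm])
    (by simp [mem_commonNeighbors, hu.2.symm, hv.2.symm])

lemma mCommon_le_one_of_mem_pair (hm : G.mCommon x y ≤ 1) (ha : a ∈ ({x, y} : Set V))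
    (hb : b ∈ ({x, y} : Set V)) (hab : a ≠ b) : G.mCommon a b ≤ 1 := by
  rcases ha with rfl | rfl <;> rcases hb with rfl | rfl <;> simp_all [mCommon_comm]

def RainbowCut (G : SimpleGraph V) (c : V → α) (x y : V) : Prop :=
  ∃ S : Set V, x ∉ S ∧ y ∉ S ∧
    (¬ G.Adj x y → ¬ (G.delVerts S).Reachable x y ∧ Set.InjOn c S) ∧
    (G.Adj x y → ¬ ((G.deleteEdges {s(x, y)}).delVerts S).Reachable x y ∧
      (Set.InjOn c (S ∪ {x}) ∨ Set.InjOn c (S ∪ {y})))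

lemma RainbowCut.symm (h : G.RainbowCut c x y) : G.RainbowCut c y x := by
  obtain ⟨S, hx, hy, hnadj, hadj⟩ := h
  refine ⟨S, hy, hx, fun h ↦ ?_, fun h ↦ ?_⟩
  · obtain ⟨hr, hc⟩ := hnadj (fun h' ↦ h h'.symm)
    exact ⟨fun r ↦ hr r.symm, hc⟩
  · obtain ⟨hr, hc⟩ := hadj h.symm
    rw [Sym2.eq_swap]
    exact ⟨fun r ↦ hr r.symm, hc.symm⟩

lemma delVerts_mono {H : SimpleGraph V} (h : H ≤ G) (S : Set V) : H.delVerts S ≤ G.delVerts S :=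
  fun _ _ huv ↦ ⟨h huv.1, huv.2⟩

def ThreePathVia (G : SimpleGraph V) (a b u v : V) : Prop :=
  G.Adj u v ∧ (G.Adj a u ∧ G.Adj v b ∨ G.Adj a v ∧ G.Adj u b)

lemma ThreePathVia.symm (h : G.ThreePathVia a b u v) : G.ThreePathVia a b v u :=
  ⟨h.1.symm, h.2.symm⟩

def NoPathVia (G : SimpleGraph V) (a b w₁ w₂ : V) : Prop :=
  w₁ ∉ G.commonNeighbors a b ∧ w₂ ∉ G.commonNeighbors a b ∧ ¬G.ThreePathVia a b w₁ w₂

lemma not_reachable_delVerts_compl {H : SimpleGraph V} (hH : H ≤ G) (hab : a ≠ b)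
    (hadj : ¬H.Adj a b) (hw₁ : w₁ ≠ b) (hw₂ : w₂ ≠ b) (h : G.NoPathVia a b w₁ w₂) :
    ¬(H.delVerts {a, b, w₁, w₂}ᶜ).Reachable a b := by
  rintro ⟨p⟩
  obtain ⟨h₁, h₂, h₃⟩ := h
  rw [mem_commonNeighbors] at h₁ h₂
  unfold ThreePathVia at h₃
  -- the vertices reachable from `a` inside `{a, b, w₁, w₂}` without passing through `b`
  let P : Set V := {v | v = a ∨ (v = w₁ ∨ v = w₂) ∧
    (G.Adj a v ∨ G.Adj a w₁ ∧ G.Adj w₁ v ∨ G.Adj a w₂ ∧ G.Adj w₂ v)}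
  obtain ⟨⟨⟨u, v⟩, huv, hu, hv⟩, -, hPu, hPv⟩ := p.exists_boundary_dart P (Or.inl rfl)
    (by rintro (h | ⟨h | h, -⟩) <;> simp_all)
  have hG := hH huv
  simp only [Set.notMem_compl_iff, Set.mem_insert_iff, Set.mem_singleton_iff] at hu hv
  simp only [P, Set.mem_ofPred_eq] at hPu hPv
  rcases hv with rfl | rfl | rfl | rfl <;> rcases hPu with rfl | ⟨rfl | rfl, h'⟩ <;>
    grind [G.adj_symm]

lemma rainbowCut_of_noPathVia_of_injOn (hab : a ≠ b) (hw₁ : w₁ ≠ b) (hw₂ : w₂ ≠ b)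
    (h : G.NoPathVia a b w₁ w₂) (hc : ¬G.Adj a b → Set.InjOn c {a, b, w₁, w₂}ᶜ)
    (hc' : G.Adj a b → Set.InjOn c {a, w₁, w₂}ᶜ) : G.RainbowCut c a b := by
  refine ⟨{a, b, w₁, w₂}ᶜ, by simp, by simp, fun hadj ↦ ?_, fun hadj ↦ ?_⟩
  · exact ⟨not_reachable_delVerts_compl le_rfl hab hadj hw₁ hw₂ h, hc hadj⟩
  · refine ⟨not_reachable_delVerts_compl (deleteEdges_le _) hab (by simp) hw₁ hw₂ h,
      .inr ((hc' hadj).mono ?_)⟩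
    intro v
    simp only [Set.mem_union, Set.mem_compl_iff, Set.mem_insert_iff, Set.mem_singleton_iff]
    grind

lemma rainbowCut_of_noPathVia (hab : a ≠ b) (hw₁ : w₁ ≠ b) (hw₂ : w₂ ≠ b)
    (h : G.NoPathVia a b w₁ w₂) (hc : Set.InjOn c {a, w₁, w₂}ᶜ) : G.RainbowCut c a b :=
  rainbowCut_of_noPathVia_of_injOn hab hw₁ hw₂ h
    (fun _ ↦ hc.mono (Set.compl_subset_compl.mpr (by grind))) fun _ ↦ hc

lemma rainbowCut_of_notMem_commonNeighbors (hab : a ≠ b) (hwb : w ≠ b)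
    (hw : w ∉ G.commonNeighbors a b) (hc : Set.InjOn c {a, w}ᶜ) : G.RainbowCut c a b :=
  rainbowCut_of_noPathVia hab hwb hwb ⟨hw, hw, fun h ↦ h.1.ne rfl⟩ (by simpa using hc)

lemma rainbowCut_of_not_adj (hab : a ≠ b) (hadj : ¬G.Adj a b) (hc : Set.InjOn c {a, b}ᶜ) :
    G.RainbowCut c a b :=
  rainbowCut_of_noPathVia_of_injOn (w₁ := a) (w₂ := a) hab hab hab
    ⟨by simp [mem_commonNeighbors], by simp [mem_commonNeighbors], fun h ↦ h.1.ne rfl⟩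
    (fun _ ↦ by simpa [Set.pair_comm] using hc) (absurd · hadj)

lemma IsRVDColoring.exists_separator (hc : G.IsRVDColoring c) (huv : u ≠ v) :
    ∃ S : Set V, (∀ w, G.Adj u w → G.Adj w v → w ∈ S) ∧
      (∀ w₁ w₂, w₁ ≠ v → w₂ ≠ u → G.Adj u w₁ → G.Adj w₁ w₂ → G.Adj w₂ v →
        w₁ ∈ S ∨ w₂ ∈ S) ∧
      Set.InjOn c S ∧ (G.Adj u v → Set.InjOn c (insert u S) ∨ Set.InjOn c (insert v S)) := by
  obtain ⟨S, hu, hv, hnadj, hadj⟩ := hc u v huv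
  set H := G.deleteEdges {s(u, v)}
  have hr : ¬(H.delVerts S).Reachable u v := by
    by_cases h : G.Adj u v
    · exact (hadj h).1
    · exact fun r ↦ (hnadj h).1 (r.mono (delVerts_mono (deleteEdges_le _) S))
  have hH {x y : V} (h : G.Adj x y) (hx : x ≠ u ∨ y ≠ v) (hy : x ≠ v ∨ y ≠ u) :
      H.Adj x y := by
    simp only [H, deleteEdges_adj, Set.mem_singleton_iff, Sym2.eq_iff]
    tauto
  have step {x y : V} (h : H.Adj x y) (hx : x ∉ S) (hy : y ∉ S) :
      (H.delVerts S).Reachable x y :=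
    Adj.reachable (G := H.delVerts S) ⟨h, hx, hy⟩
  refine ⟨S, fun w h₁ h₂ ↦ ?_, fun w₁ w₂ hw₁ hw₂ h₁ h₂ h₃ ↦ ?_, ?_, fun h ↦ ?_⟩
  · by_contra hw
    exact hr ((step (hH h₁ (.inr h₂.ne) (.inr h₁.ne')) hu hw).trans
      (step (hH h₂ (.inl h₁.ne') (.inl h₂.ne)) hw hv))
  · by_contra! hw
    exact hr (((step (hH h₁ (.inr hw₁) (.inr h₁.ne')) hu hw.1).trans
      (step (hH h₂ (.inl h₁.ne') (.inl hw₁)) hw.1 hw.2)).trans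
      (step (hH h₃ (.inl hw₂) (.inl h₃.ne)) hw.2 hv))
  · by_cases h : G.Adj u v
    · exact (hadj h).2.elim (·.mono Set.subset_union_left) (·.mono Set.subset_union_left)
    · exact (hnadj h).2
  · simpa only [Set.union_singleton] using (hadj h).2

lemma IsRVDColoring.mCommon_le_one (hc : G.IsRVDColoring c) (huv : u ≠ v) (h : c u = c v) :
    G.mCommon u v ≤ 1 := by
  by_contra! h2
  rw [mCommon_eq_ncard] at h2
  obtain ⟨w, w', hw, hw', hww⟩ :=
    (Set.one_lt_ncard_iff (Set.finite_of_ncard_pos (by omega))).mp h2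
  obtain ⟨S, hS, -, hinj, -⟩ := hc.exists_separator hww
  rw [mem_commonNeighbors] at hw hw'
  exact huv (hinj (hS u hw.1.symm hw'.1) (hS v hw.2.symm hw'.2) h)

lemma IsRVDColoring.not_triangle (hc : G.IsRVDColoring c) (hxy : c x = c y) (hxz : c x = c z) :
    ¬(G.Adj x y ∧ G.Adj y z ∧ G.Adj x z) := by
  rintro ⟨h₁, h₂, h₃⟩
  obtain ⟨S, hS, -, -, hinj⟩ := hc.exists_separator h₁.ne
  have hz := hS z h₃ h₂.symm
  rcases hinj h₁ with hinj | hinj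
  · exact h₃.ne (hinj (S.mem_insert x) (S.mem_insert_of_mem x hz) hxz)
  · exact h₂.ne (hinj (S.mem_insert y) (S.mem_insert_of_mem y hz) (hxy.symm.trans hxz))

lemma IsRVDColoring.not_configIV (hc : G.IsRVDColoring c) (hxy : x ≠ y) (hxz : x ≠ z)
    (hyz : y ≠ z) (hcxy : c x = c y) (hcxz : c x = c z) : ¬G.ConfigIV x y z := by
  rintro ⟨u, v, a, b, d, huv, hu, hv, hperm, h₁, h₂, h₃, h₄, h₅⟩
  have hmem : ∀ t ∈ [a, b, d], t ∈ ({x, y, z} : Set V) ∧ c t = c x := fun t ht ↦ by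
    rw [hperm.mem_iff] at ht
    simp only [List.mem_cons, List.not_mem_nil, or_false] at ht
    rcases ht with rfl | rfl | rfl <;> simp [← hcxy, ← hcxz]
  have hnd : [a, b, d].Nodup := hperm.nodup_iff.mpr (by simp [hxy, hxz, hyz])
  simp only [List.mem_cons, List.not_mem_nil, or_false, forall_eq_or_imp, forall_eq] at hmem
  simp only [List.nodup_cons, List.mem_cons, List.not_mem_nil, not_or] at hnd
  obtain ⟨S, hS₂, hS₃, hinj, -⟩ := hc.exists_separator huv
  have ha := hS₂ a h₁ h₂
  rcases hS₃ b d (fun h ↦ hv (h ▸ hmem.2.1.1)) (fun h ↦ hu (h ▸ hmem.2.2.1)) h₃ h₄ h₅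
    with hb | hd
  · exact hnd.1.1 (hinj ha hb (hmem.1.2.trans hmem.2.1.2.symm))
  · exact hnd.1.2.1 (hinj ha hd (hmem.1.2.trans hmem.2.2.2.symm))

lemma IsRVDColoring.not_configI (hc : G.IsRVDColoring c) (hxy : x ≠ y) (hpq : p ≠ q)
    (hcxy : c x = c y) (hcpq : c p = c q) : ¬G.ConfigI x y p q := by
  rintro ⟨u, v, huv, hu, hv, h₁, h₂, h₃, h₄, h₅, h₆, h₇⟩
  simp only [Set.mem_insert_iff, Set.mem_singleton_iff, not_or] at hu hv
  obtain ⟨S, hS₂, hS₃, hinj, -⟩ := hc.exists_separator huv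
  rcases hS₃ y q (Ne.symm hv.2.1) (Ne.symm hu.2.2.2) h₅ h₆ h₇ with hy | hq
  · exact hxy (hinj (hS₂ x h₁ h₂) hy hcxy)
  · exact hpq (hinj (hS₂ p h₃ h₄) hq hcpq)

lemma IsRVDColoring.not_configII (hc : G.IsRVDColoring c) (hxy : x ≠ y) (hpq : p ≠ q)
    (hcxy : c x = c y) (hcpq : c p = c q) : ¬G.ConfigII x y p q := by
  rintro ⟨h₁, h₂, h₃, h₄, h₅⟩
  obtain ⟨S, hS, -, -, hinj⟩ := hc.exists_separator h₁.ne
  rcases hinj h₁ with hinj | hinj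
  · exact hxy (hinj (S.mem_insert x) (S.mem_insert_of_mem x (hS y h₂ h₃)) hcxy)
  · exact hpq (hinj (S.mem_insert p) (S.mem_insert_of_mem p (hS q h₄ h₅)) hcpq)

lemma IsRVDColoring.of_finer {c' : V → β} (hc : G.IsRVDColoring c)
    (h : ∀ u v, c' u = c' v → c u = c v) : G.IsRVDColoring c' := by
  have hinj {S : Set V} (hS : Set.InjOn c S) : Set.InjOn c' S :=
    fun u hu v hv huv ↦ hS hu hv (h u v huv)
  intro x y hxy
  obtain ⟨S, hx, hy, hnadj, hadj⟩ := hc x y hxy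
  exact ⟨S, hx, hy, fun h ↦ (hnadj h).imp_right hinj,
    fun h ↦ (hadj h).imp_right (Or.imp hinj hinj)⟩

lemma isRVDColoring_of_injective (hc : c.Injective) : G.IsRVDColoring c :=
  fun _ _ hab ↦ rainbowCut_of_notMem_commonNeighbors hab hab (by simp [mem_commonNeighbors])
    hc.injOn

lemma rvd_le_iff [Fintype V] {k : ℕ} :
    G.rvd ≤ k ↔ ∃ c : V → Fin k, G.IsRVDColoring c := by
  have hne : {k | ∃ c : V → Fin k, G.IsRVDColoring c}.Nonempty :=
    ⟨_, _, isRVDColoring_of_injective (Fintype.equivFin V).injective⟩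
  refine ⟨fun h ↦ ?_, fun ⟨c, hc⟩ ↦ Nat.sInf_le ⟨c, hc⟩⟩
  obtain ⟨c, hc⟩ := Nat.sInf_mem hne
  exact ⟨Fin.castLE h ∘ c, hc.of_finer fun u v huv ↦ Fin.castLE_injective h huv⟩

lemma rvd_le_ncard_range [Fintype V] (hc : G.IsRVDColoring c) :
    G.rvd ≤ (Set.range c).ncard := by
  rw [← Nat.card_coe_set_eq]
  exact rvd_le_iff.mpr ⟨Finite.equivFin _ ∘ Set.rangeFactorization c,
    hc.of_finer fun u v huv ↦ congrArg Subtype.val ((Finite.equivFin _).injective huv)⟩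

lemma isRVDColoring_of_merged_pair [Finite V] (hm : G.mCommon x y ≤ 1)
    (hc : ∀ u v, c u = c v → u = v ∨ u ∈ ({x, y} : Set V) ∧ v ∈ ({x, y} : Set V)) :
    G.IsRVDColoring c := by
  have hinj {R : Set V} {w : V} (hw : w ∈ ({x, y} : Set V)) (hwR : w ∈ R) : Set.InjOn c Rᶜ :=
    Set.injOn_compl_of_merged (fun u v h ↦ (hc u v h).imp_right .inl)
      (Set.subsingleton_pair_sdiff hw hwR) (Set.subsingleton_pair_sdiff hw hwR)
  have hmem {a b : V} (hab : a ≠ b) (ha : a ∈ ({x, y} : Set V)) : G.RainbowCut c a b :=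
    rainbowCut_of_notMem_commonNeighbors hab hab (by simp [mem_commonNeighbors])
      (hinj ha (by simp))
  intro a b hab
  by_cases ha : a ∈ ({x, y} : Set V)
  · exact hmem hab ha
  by_cases hb : b ∈ ({x, y} : Set V)
  · exact (hmem (Ne.symm hab) hb).symm
  obtain ⟨w, hw, hncn⟩ : ∃ w ∈ ({x, y} : Set V), w ∉ G.commonNeighbors a b := by
    by_contra! h
    exact hab (eq_of_mem_commonNeighbors hm (h x (by simp)) (h y (by simp)))
  exact rainbowCut_of_notMem_commonNeighbors hab (ne_of_mem_of_not_mem hw hb) hncn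
    (hinj hw (by simp))

lemma rvd_le_card_sub_one_of_mCommon_le_one [Fintype V] (hxy : x ≠ y)
    (hm : G.mCommon x y ≤ 1) : G.rvd ≤ Fintype.card V - 1 := by
  classical
  let f := Function.update id y x
  have hf : ∀ u v, f u = f v → u = v ∨ u ∈ ({x, y} : Set V) ∧ v ∈ ({x, y} : Set V) := by
    intro u v
    simp only [f, Function.update_apply, id]
    split_ifs <;> grind
  calc G.rvd ≤ (Set.range f).ncard := rvd_le_ncard_range (isRVDColoring_of_merged_pair hm hf)
    _ ≤ Fintype.card V - ({y} : Set V).ncard := Set.ncard_range_le_card_sub fun v ↦ by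
        simp only [f, Function.update_apply, id]
        split_ifs <;> grind
    _ = Fintype.card V - 1 := by rw [Set.ncard_singleton]

lemma configIV_of_mem (huv : u ≠ v) (hu : u ∉ ({x, y, z} : Set V))
    (hv : v ∉ ({x, y, z} : Set V)) (ha : a ∈ ({x, y, z} : Set V)) (hb : b ∈ ({x, y, z} : Set V))
    (hw : w ∈ ({x, y, z} : Set V)) (hab : a ≠ b) (haw : a ≠ w) (hbw : b ≠ w)
    (h₁ : G.Adj u a) (h₂ : G.Adj a v) (h₃ : G.Adj u b) (h₄ : G.Adj b w) (h₅ : G.Adj w v) :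
    G.ConfigIV x y z := by
  refine ⟨u, v, a, b, w, huv, hu, hv, ?_, h₁, h₂, h₃, h₄, h₅⟩
  refine (List.subperm_of_subset (by simp [hab, haw, hbw]) ?_).perm_of_length_le (by simp)
  simp only [Set.mem_insert_iff, Set.mem_singleton_iff] at ha hb hw
  simp only [List.subset_def, List.mem_cons, List.not_mem_nil, or_false, forall_eq_or_imp,
    forall_eq]
  tauto

lemma rainbowCut_of_merged_triple [Finite V] {T : Set V} (hT : T.ncard = 3)
    (hm : T.Pairwise fun u v ↦ G.mCommon u v ≤ 1) (hcl : ¬G.IsClique T)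
    (hc : ∀ u v, c u = c v → u = v ∨ u ∈ T ∧ v ∈ T) (hab : a ≠ b) (ha : a ∈ T) :
    G.RainbowCut c a b := by
  have hinj {R : Set V} {w : V} (hw : w ∈ T) (haw : a ≠ w) (haR : a ∈ R) (hwR : w ∈ R) :
      Set.InjOn c Rᶜ := by
    have hsub := Set.subsingleton_sdiff_of_ncard_eq_three hT ha hw haw haR hwR
    exact Set.injOn_compl_of_merged (fun u v h ↦ (hc u v h).imp_right .inl) hsub hsub
  by_cases hb : b ∈ T
  · by_cases hadj : G.Adj a b
    · obtain ⟨w, hw⟩ := Set.exists_sdiff_pair_eq_singleton hT ha hb hab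
      have hwT : w ∈ T \ {a, b} := by simp [hw]
      simp only [Set.mem_sdiff, Set.mem_insert_iff, Set.mem_singleton_iff, not_or] at hwT
      refine rainbowCut_of_notMem_commonNeighbors hab hwT.2.2 (fun hcn ↦ hcl ?_)
        (hinj hwT.1 (Ne.symm hwT.2.1) (by simp) (by simp))
      rw [mem_commonNeighbors] at hcn
      rw [← Set.sdiff_union_of_subset (t := {a, b})
        (Set.insert_subset_iff.mpr ⟨ha, Set.singleton_subset_iff.mpr hb⟩), hw]
      simp [isClique_insert, hadj, hcn.1, hcn.2]
    · exact rainbowCut_of_not_adj hab hadj (hinj hb hab (by simp) (by simp))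
  · obtain ⟨w₁, w₂, hne, heq⟩ : ∃ w₁ w₂, w₁ ≠ w₂ ∧ T \ {a} = {w₁, w₂} :=
      Set.ncard_eq_two.mp (by rw [Set.ncard_sdiff_singleton_of_mem ha, hT])
    have hw₁ : w₁ ∈ T \ {a} := by simp [heq]
    have hw₂ : w₂ ∈ T \ {a} := by simp [heq]
    obtain ⟨w, hw, hncn⟩ : ∃ w ∈ T \ {a}, w ∉ G.commonNeighbors a b := by
      by_contra! h
      exact hab (eq_of_mem_commonNeighbors (hm hw₁.1 hw₂.1 hne) (h w₁ hw₁) (h w₂ hw₂))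
    exact rainbowCut_of_notMem_commonNeighbors hab (fun h ↦ hb (h ▸ hw.1)) hncn
      (hinj hw.1 (Ne.symm hw.2) (by simp) (by simp))

section Triple

variable [Finite V] (hxy : x ≠ y) (hxz : x ≠ z) (hyz : y ≠ z)
  (hm : ({x, y, z} : Set V).Pairwise fun u v ↦ G.mCommon u v ≤ 1)
  (hcl : ¬G.IsClique {x, y, z}) (hIV : ¬G.ConfigIV x y z)
include hxy hxz hyz hm hcl hIV

lemma exists_noPathVia_of_triple (hab : a ≠ b) (ha : a ∉ ({x, y, z} : Set V))
    (hb : b ∉ ({x, y, z} : Set V)) :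
    ∃ w₁ ∈ ({x, y, z} : Set V), ∃ w₂ ∈ ({x, y, z} : Set V), w₁ ≠ w₂ ∧ G.NoPathVia a b w₁ w₂ := by
  set T : Set V := {x, y, z}
  have hT : T.ncard = 3 := Set.ncard_eq_three.mpr ⟨x, y, z, hxy, hxz, hyz, rfl⟩
  by_cases hcn : ∃ w ∈ T, w ∈ G.commonNeighbors a b
  · obtain ⟨w, hwT, hw⟩ := hcn
    obtain ⟨w₁, w₂, hne, heq⟩ : ∃ w₁ w₂, w₁ ≠ w₂ ∧ T \ {w} = {w₁, w₂} :=
      Set.ncard_eq_two.mp (by rw [Set.ncard_sdiff_singleton_of_mem hwT, hT])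
    have hw₁ : w₁ ∈ T \ {w} := by simp [heq]
    have hw₂ : w₂ ∈ T \ {w} := by simp [heq]
    have hncn {w'} (hw' : w' ∈ T \ {w}) : w' ∉ G.commonNeighbors a b := fun h ↦
      hab (eq_of_mem_commonNeighbors (hm hwT hw'.1 (Ne.symm hw'.2)) hw h)
    refine ⟨w₁, hw₁.1, w₂, hw₂.1, hne, hncn hw₁, hncn hw₂, ?_⟩
    rw [mem_commonNeighbors] at hw
    -- a path `a - w₁ - w₂ - b` together with `a - w - b` is configuration (iv)
    rintro ⟨h₁₂, ⟨h₁, h₂⟩ | ⟨h₂, h₁⟩⟩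
    · exact hIV (configIV_of_mem hab ha hb hwT hw₁.1 hw₂.1 (Ne.symm hw₁.2) (Ne.symm hw₂.2) hne
        hw.1 hw.2.symm h₁ h₁₂ h₂)
    · exact hIV (configIV_of_mem hab ha hb hwT hw₂.1 hw₁.1 (Ne.symm hw₂.2) (Ne.symm hw₁.2)
        hne.symm hw.1 hw.2.symm h₂ h₁₂.symm h₁)
  · push Not at hcn
    obtain ⟨w₁, hw₁, w₂, hw₂, hne, hadj⟩ : ∃ w₁ ∈ T, ∃ w₂ ∈ T, w₁ ≠ w₂ ∧ ¬G.Adj w₁ w₂ := by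
      by_contra! h
      exact hcl fun u hu v hv huv ↦ h u hu v hv huv
    exact ⟨w₁, hw₁, w₂, hw₂, hne, hcn w₁ hw₁, hcn w₂ hw₂, fun h ↦ hadj h.1⟩

lemma isRVDColoring_of_merged_triple
    (hc : ∀ u v, c u = c v → u = v ∨ u ∈ ({x, y, z} : Set V) ∧ v ∈ ({x, y, z} : Set V)) :
    G.IsRVDColoring c := by
  have hT : ({x, y, z} : Set V).ncard = 3 :=
    Set.ncard_eq_three.mpr ⟨x, y, z, hxy, hxz, hyz, rfl⟩
  intro a b hab
  by_cases ha : a ∈ ({x, y, z} : Set V)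
  · exact rainbowCut_of_merged_triple hT hm hcl hc hab ha
  by_cases hb : b ∈ ({x, y, z} : Set V)
  · exact (rainbowCut_of_merged_triple hT hm hcl hc (Ne.symm hab) hb).symm
  obtain ⟨w₁, hw₁, w₂, hw₂, hne, hpath⟩ :=
    exists_noPathVia_of_triple hxy hxz hyz hm hcl hIV hab ha hb
  have hsub := Set.subsingleton_sdiff_of_ncard_eq_three (R := {a, w₁, w₂}) hT hw₁ hw₂ hne
    (by simp) (by simp)
  exact rainbowCut_of_noPathVia hab (ne_of_mem_of_not_mem hw₁ hb) (ne_of_mem_of_not_mem hw₂ hb)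
    hpath (Set.injOn_compl_of_merged (fun u v h ↦ (hc u v h).imp_right .inl) hsub hsub)

end Triple

lemma rvd_le_card_sub_two_of_triple [Fintype V] (hxy : x ≠ y) (hxz : x ≠ z) (hyz : y ≠ z)
    (hm : ({x, y, z} : Set V).Pairwise fun u v ↦ G.mCommon u v ≤ 1)
    (hcl : ¬G.IsClique {x, y, z}) (hIV : ¬G.ConfigIV x y z) :
    G.rvd ≤ Fintype.card V - 2 := by
  classical
  let f := Function.update (Function.update id y x) z x
  have hf : ∀ u v, f u = f v → u = v ∨ u ∈ ({x, y, z} : Set V) ∧ v ∈ ({x, y, z} : Set V) := by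
    intro u v
    simp only [f, Function.update_apply, id]
    split_ifs <;> grind
  calc G.rvd ≤ (Set.range f).ncard :=
        rvd_le_ncard_range (isRVDColoring_of_merged_triple hxy hxz hyz hm hcl hIV hf)
    _ ≤ Fintype.card V - ({y, z} : Set V).ncard := Set.ncard_range_le_card_sub fun v ↦ by
        simp only [f, Function.update_apply, id]
        split_ifs <;> grind
    _ = Fintype.card V - 2 := by rw [Set.ncard_pair hyz]

def PairsLinked (G : SimpleGraph V) (x y p q : V) : Prop :=
  ∃ x' y' p' q', ((x' = x ∧ y' = y) ∨ (x' = y ∧ y' = x)) ∧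
    ((p' = p ∧ q' = q) ∨ (p' = q ∧ q' = p)) ∧
    (G.ConfigI x' y' p' q' ∨ G.ConfigII x' y' p' q')

lemma PairsLinked.symm (h : G.PairsLinked x y p q) : G.PairsLinked p q x y := by
  obtain ⟨x', y', p', q', hxy, hpq, ⟨u, v, huv, hu, hv, h₁, h₂, h₃, h₄, h₅, h₆, h₇⟩ |
    ⟨h₁, h₂, h₃, h₄, h₅⟩⟩ := h
  · refine ⟨p', q', x', y', hpq, hxy, .inl ⟨v, u, huv.symm, ?_, ?_, h₄.symm, h₃.symm,
      h₂.symm, h₁.symm, h₇.symm, h₆.symm, h₅.symm⟩⟩ <;> grind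
  · exact ⟨p', q', x', y', hpq, hxy, .inr ⟨h₁.symm, h₅.symm, h₄.symm, h₃.symm, h₂.symm⟩⟩

lemma not_threePathVia_of_mCommon_le_one [Finite V] {v' : V} (hm : G.mCommon v v' ≤ 1)
    (hw : w ∉ G.commonNeighbors a b) (hwa : w ≠ a) (hwb : w ≠ b)
    (h : G.ThreePathVia a b w v) : ¬G.ThreePathVia a b w v' := by
  rintro ⟨hv', h'⟩
  obtain ⟨hv, h⟩ := h
  simp only [mem_commonNeighbors] at hw
  rcases h with ⟨h₁, h₂⟩ | ⟨h₁, h₂⟩ <;> rcases h' with ⟨h₃, h₄⟩ | ⟨h₃, h₄⟩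
  · exact hwb (eq_of_mCommon_le_one hm ⟨hv.symm, hv'.symm⟩ ⟨h₂, h₄⟩)
  · exact hw ⟨h₁, h₄.symm⟩
  · exact hw ⟨h₃, h₂.symm⟩
  · exact hwa (eq_of_mCommon_le_one hm ⟨hv.symm, hv'.symm⟩ ⟨h₁.symm, h₃.symm⟩)

section Pairs

variable [Finite V] (hxy : x ≠ y) (hpq : p ≠ q) (hm₁ : G.mCommon x y ≤ 1)
  (hm₂ : G.mCommon p q ≤ 1) (hlink : ¬G.PairsLinked x y p q)
include hxy hpq hm₁ hm₂ hlink

lemma rainbowCut_of_merged_pairs_of_mem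
    (hc : ∀ u v, c u = c v → u = v ∨ u ∈ ({x, y} : Set V) ∧ v ∈ ({x, y} : Set V) ∨
      u ∈ ({p, q} : Set V) ∧ v ∈ ({p, q} : Set V))
    (hab : a ≠ b) (ha : a ∈ ({x, y} : Set V)) : G.RainbowCut c a b := by
  have hinj {R : Set V} {w w' : V} (hw : w ∈ ({x, y} : Set V)) (hw' : w' ∈ ({p, q} : Set V))
      (hwR : w ∈ R) (hw'R : w' ∈ R) : Set.InjOn c Rᶜ :=
    Set.injOn_compl_of_merged hc (Set.subsingleton_pair_sdiff hw hwR)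
      (Set.subsingleton_pair_sdiff hw' hw'R)
  by_cases hb : b ∈ ({p, q} : Set V)
  · by_cases hadj : G.Adj a b
    · obtain ⟨a', ha'T, ha'a, ha'⟩ := Set.exists_mate_of_mem_pair hxy ha
      obtain ⟨b', hb'T, hb'b, hb'⟩ := Set.exists_mate_of_mem_pair hpq hb
      -- otherwise `a a' b b'` is configuration (ii)
      have : a' ∉ G.commonNeighbors b a ∨ b' ∉ G.commonNeighbors a b := by
        by_contra! h
        simp only [mem_commonNeighbors] at h
        exact hlink ⟨a, a', b, b', ha', hb', .inr ⟨hadj, h.1.2, h.1.1.symm, h.2.1, h.2.2.symm⟩⟩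
      rcases this with h | h
      · exact (rainbowCut_of_notMem_commonNeighbors (Ne.symm hab) ha'a h
          (hinj ha'T hb (by simp) (by simp))).symm
      · exact rainbowCut_of_notMem_commonNeighbors hab hb'b h (hinj ha hb'T (by simp) (by simp))
    · exact rainbowCut_of_not_adj hab hadj (hinj ha hb (by simp) (by simp))
  · obtain ⟨w, hw, hncn⟩ : ∃ w ∈ ({p, q} : Set V), w ∉ G.commonNeighbors a b := by
      by_contra! h
      by_cases hb' : b ∈ ({x, y} : Set V)
      · exact hpq (eq_of_mCommon_le_one (mCommon_le_one_of_mem_pair hm₁ ha hb' hab)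
          (h p (by simp)) (h q (by simp)))
      · exact hab (eq_of_mem_commonNeighbors hm₂ (h p (by simp)) (h q (by simp)))
    exact rainbowCut_of_notMem_commonNeighbors hab (ne_of_mem_of_not_mem hw hb) hncn
      (hinj ha hw (by simp) (by simp))

lemma exists_noPathVia_of_pairs (hab : a ≠ b) (ha : a ∉ ({x, y, p, q} : Set V))
    (hb : b ∉ ({x, y, p, q} : Set V)) :
    ∃ w₁ ∈ ({x, y} : Set V), ∃ w₂ ∈ ({p, q} : Set V), G.NoPathVia a b w₁ w₂ := by
  have hncn {x y : V} (hm : G.mCommon x y ≤ 1) :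
      ∃ w ∈ ({x, y} : Set V), w ∉ G.commonNeighbors a b := by
    by_contra! h
    exact hab (eq_of_mem_commonNeighbors hm (h x (by simp)) (h y (by simp)))
  obtain ⟨w₁, hw₁, hncn₁⟩ := hncn hm₁
  obtain ⟨w₂, hw₂, hncn₂⟩ := hncn hm₂
  obtain ⟨w₁', hw₁', -, hs₁⟩ := Set.exists_mate_of_mem_pair hxy hw₁
  obtain ⟨w₂', hw₂', -, hs₂⟩ := Set.exists_mate_of_mem_pair hpq hw₂
  have hm₁' : G.mCommon w₁ w₁' ≤ 1 := by grind [mCommon_comm]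
  have hm₂' : G.mCommon w₂ w₂' ≤ 1 := by grind [mCommon_comm]
  have hne {w : V} (hw : w ∈ ({x, y, p, q} : Set V)) : a ≠ w ∧ b ≠ w :=
    ⟨(ne_of_mem_of_not_mem hw ha).symm, (ne_of_mem_of_not_mem hw hb).symm⟩
  have hw₁a := hne (w := w₁) (by grind)
  have hw₂a := hne (w := w₂) (by grind)
  by_cases h₁₂ : G.ThreePathVia a b w₁ w₂
  swap
  · exact ⟨w₁, hw₁, w₂, hw₂, hncn₁, hncn₂, h₁₂⟩
  by_cases hcn₁' : w₁' ∈ G.commonNeighbors a b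
  · by_cases hcn₂' : w₂' ∈ G.commonNeighbors a b
    · -- `a` and `b` would be the ends of configuration (i) on `w₁' w₁ w₂' w₂`
      exfalso
      rw [mem_commonNeighbors] at hcn₁' hcn₂'
      have hw₁'a := hne (w := w₁') (by grind)
      have hw₂'a := hne (w := w₂') (by grind)
      refine hlink ⟨w₁', w₁, w₂', w₂, by tauto, by tauto, .inl ?_⟩
      obtain ⟨h₁₂, ⟨h₁, h₂⟩ | ⟨h₂, h₁⟩⟩ := h₁₂
      · exact ⟨a, b, hab, by grind, by grind, hcn₁'.1, hcn₁'.2.symm, hcn₂'.1, hcn₂'.2.symm,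
          h₁, h₁₂, h₂⟩
      · exact ⟨b, a, hab.symm, by grind, by grind, hcn₁'.2, hcn₁'.1.symm, hcn₂'.2,
          hcn₂'.1.symm, h₁.symm, h₁₂, h₂.symm⟩
    · exact ⟨w₁, hw₁, w₂', hw₂', hncn₁, hcn₂',
        not_threePathVia_of_mCommon_le_one hm₂' hncn₁ hw₁a.1.symm hw₁a.2.symm h₁₂⟩
  · exact ⟨w₁', hw₁', w₂, hw₂, hcn₁', hncn₂, fun h ↦ not_threePathVia_of_mCommon_le_one
      hm₁' hncn₂ hw₂a.1.symm hw₂a.2.symm h₁₂.symm h.symm⟩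

lemma isRVDColoring_of_merged_pairs
    (hc : ∀ u v, c u = c v → u = v ∨ u ∈ ({x, y} : Set V) ∧ v ∈ ({x, y} : Set V) ∨
      u ∈ ({p, q} : Set V) ∧ v ∈ ({p, q} : Set V)) :
    G.IsRVDColoring c := by
  have hmem {a b : V} (hab : a ≠ b) (ha : a ∈ ({x, y, p, q} : Set V)) : G.RainbowCut c a b := by
    rcases (show a ∈ ({x, y} : Set V) ∨ a ∈ ({p, q} : Set V) by simpa [or_assoc] using ha)
      with ha | ha
    · exact rainbowCut_of_merged_pairs_of_mem hxy hpq hm₁ hm₂ hlink hc hab ha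
    · exact rainbowCut_of_merged_pairs_of_mem hpq hxy hm₂ hm₁ (hlink ∘ .symm)
        (fun u v h ↦ (hc u v h).imp_right Or.symm) hab ha
  intro a b hab
  by_cases ha : a ∈ ({x, y, p, q} : Set V)
  · exact hmem hab ha
  by_cases hb : b ∈ ({x, y, p, q} : Set V)
  · exact (hmem (Ne.symm hab) hb).symm
  obtain ⟨w₁, hw₁, w₂, hw₂, hpath⟩ := exists_noPathVia_of_pairs hxy hpq hm₁ hm₂ hlink hab ha hb
  exact rainbowCut_of_noPathVia hab (ne_of_mem_of_not_mem (by grind) hb)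
    (ne_of_mem_of_not_mem (by grind) hb) hpath (Set.injOn_compl_of_merged hc
      (Set.subsingleton_pair_sdiff hw₁ (by simp)) (Set.subsingleton_pair_sdiff hw₂ (by simp)))

end Pairs

lemma rvd_le_card_sub_two_of_pairs [Fintype V] (hxy : x ≠ y) (hpq : p ≠ q)
    (hdisj : ({x, y} : Set V) ∩ {p, q} = ∅) (hm₁ : G.mCommon x y ≤ 1)
    (hm₂ : G.mCommon p q ≤ 1) (hlink : ¬G.PairsLinked x y p q) :
    G.rvd ≤ Fintype.card V - 2 := by
  classical
  rw [← Set.disjoint_iff_inter_eq_empty] at hdisj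
  simp only [Set.disjoint_insert_left, Set.disjoint_insert_right, Set.disjoint_singleton_left,
    Set.mem_insert_iff, Set.mem_singleton_iff, not_or] at hdisj
  let f := Function.update (Function.update id y x) q p
  have hf : ∀ u v, f u = f v → u = v ∨ u ∈ ({x, y} : Set V) ∧ v ∈ ({x, y} : Set V) ∨
      u ∈ ({p, q} : Set V) ∧ v ∈ ({p, q} : Set V) := by
    intro u v
    simp only [f, Function.update_apply, id]
    split_ifs <;> grind
  calc G.rvd ≤ (Set.range f).ncard :=
        rvd_le_ncard_range (isRVDColoring_of_merged_pairs hxy hpq hm₁ hm₂ hlink hf)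
    _ ≤ Fintype.card V - ({y, q} : Set V).ncard := Set.ncard_range_le_card_sub fun v ↦ by
        simp only [f, Function.update_apply, id]
        split_ifs <;> grind
    _ = Fintype.card V - 2 := by rw [Set.ncard_pair (by grind)]

def PairsCondition (G : SimpleGraph V) : Prop :=
  ∀ x y p q : V, x ≠ y → p ≠ q → ({x, y} : Set V) ∩ {p, q} = ∅ →
    G.mCommon x y ≤ 1 → G.mCommon p q ≤ 1 → G.PairsLinked x y p q

def TriplesCondition (G : SimpleGraph V) : Prop :=
  ∀ x y z : V, x ≠ y → x ≠ z → y ≠ z →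
    G.mCommon x y ≤ 1 → G.mCommon x z ≤ 1 → G.mCommon y z ≤ 1 →
    (G.Adj x y ∧ G.Adj y z ∧ G.Adj x z) ∨ G.ConfigIV x y z

lemma rvd_le_card_sub_one_iff [Fintype V] [Nonempty V] :
    G.rvd ≤ Fintype.card V - 1 ↔ ∃ x y : V, x ≠ y ∧ G.mCommon x y ≤ 1 := by
  refine ⟨fun h ↦ ?_, fun ⟨x, y, hxy, hm⟩ ↦ rvd_le_card_sub_one_of_mCommon_le_one hxy hm⟩
  obtain ⟨c, hc⟩ := rvd_le_iff.mp h
  obtain ⟨x, y, hxy, hcxy⟩ := Fintype.exists_ne_map_eq_of_card_lt c (by simp [Fintype.card_pos])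
  exact ⟨x, y, hxy, hc.mCommon_le_one hxy hcxy⟩

lemma PairsCondition.not_rvd_le_card_sub_two [Fintype V] (hn : 2 ≤ Fintype.card V)
    (hpairs : G.PairsCondition) (htriples : G.TriplesCondition) :
    ¬G.rvd ≤ Fintype.card V - 2 := by
  intro h
  obtain ⟨c, hc⟩ := rvd_le_iff.mp h
  rcases Fintype.exists_triple_or_two_pairs c (by rw [Fintype.card_fin]; omega) with
    ⟨x, y, z, hxy, hxz, hyz, hcxy, hcxz⟩ | ⟨x, y, p, q, hxy, hpq, hcxy, hcpq, hcxp⟩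
  · rcases htriples x y z hxy hxz hyz (hc.mCommon_le_one hxy hcxy)
      (hc.mCommon_le_one hxz hcxz) (hc.mCommon_le_one hyz (hcxy.symm.trans hcxz)) with h | h
    · exact hc.not_triangle hcxy hcxz h
    · exact hc.not_configIV hxy hxz hyz hcxy hcxz h
  · have hdisj : ({x, y} : Set V) ∩ {p, q} = ∅ := by
      ext v
      simp only [Set.mem_inter_iff, Set.mem_insert_iff, Set.mem_singleton_iff,
        Set.mem_empty_iff_false, iff_false, not_and, not_or]
      rintro (rfl | rfl) <;> grind
    obtain ⟨x', y', p', q', hxy', hpq', h⟩ := hpairs x y p q hxy hpq hdisj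
      (hc.mCommon_le_one hxy hcxy) (hc.mCommon_le_one hpq hcpq)
    have hcxy' : c x' = c y' := by grind
    have hcpq' : c p' = c q' := by grind
    rcases h with h | h
    · exact hc.not_configI (by grind) (by grind) hcxy' hcpq' h
    · exact hc.not_configII (by grind) (by grind) hcxy' hcpq' h

lemma rvd_le_card_sub_two_iff [Fintype V] (hn : 2 ≤ Fintype.card V) :
    G.rvd ≤ Fintype.card V - 2 ↔ ¬(G.PairsCondition ∧ G.TriplesCondition) := by
  refine ⟨fun h ⟨hpairs, htriples⟩ ↦ hpairs.not_rvd_le_card_sub_two hn htriples h, fun h ↦ ?_⟩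
  simp only [PairsCondition, TriplesCondition, not_and_or] at h
  push Not at h
  rcases h with ⟨x, y, p, q, hxy, hpq, hdisj, hm₁, hm₂, hlink⟩ |
    ⟨x, y, z, hxy, hxz, hyz, hm₁, hm₂, hm₃, htri, hIV⟩
  · exact rvd_le_card_sub_two_of_pairs hxy hpq hdisj hm₁ hm₂ hlink
  · refine rvd_le_card_sub_two_of_triple hxy hxz hyz ?_ ?_ hIV
    · rintro u (rfl | rfl | rfl) v (rfl | rfl | rfl) huv <;> simp_all [mCommon_comm]
    · simp only [isClique_insert, isClique_singleton, Set.mem_insert_iff, Set.mem_singleton_iff]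
      grind [G.adj_symm]

end SimpleGraph

theorem rvd_eq_card_sub_one_iff_general {V : Type*} [Fintype V] [Nontrivial V]
    (G : SimpleGraph V) :
    G.rvd = Fintype.card V - 1 ↔
      ((∃ x y : V, x ≠ y ∧ G.mCommon x y ≤ 1) ∧
       (∀ x y p q : V, x ≠ y → p ≠ q → ({x, y} : Set V) ∩ {p, q} = ∅ →
          G.mCommon x y ≤ 1 → G.mCommon p q ≤ 1 →
          ∃ x' y' p' q' : V,
            ((x' = x ∧ y' = y) ∨ (x' = y ∧ y' = x)) ∧
            ((p' = p ∧ q' = q) ∨ (p' = q ∧ q' = p)) ∧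
            (G.ConfigI x' y' p' q' ∨ G.ConfigII x' y' p' q')) ∧
       (∀ x y z : V, x ≠ y → x ≠ z → y ≠ z →
          G.mCommon x y ≤ 1 → G.mCommon x z ≤ 1 → G.mCommon y z ≤ 1 →
          ((G.Adj x y ∧ G.Adj y z ∧ G.Adj x z) ∨ G.ConfigIV x y z))) := by
  change _ ↔ _ ∧ G.PairsCondition ∧ G.TriplesCondition
  have hn : 2 ≤ Fintype.card V := Fintype.one_lt_card
  rw [← G.rvd_le_card_sub_one_iff, ← not_not (a := G.PairsCondition ∧ _),
    ← G.rvd_le_card_sub_two_iff hn]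
  omega

/-- Characterization of the nontrivial connected graphs of order `n` with
`rvd(G) = n - 1`. -/
theorem rvd_eq_card_sub_one_iff {V : Type*} [Fintype V] [Nontrivial V]
    (G : SimpleGraph V) (hG : G.Connected) :
    G.rvd = Fintype.card V - 1 ↔
      ((∃ x y : V, x ≠ y ∧ G.mCommon x y ≤ 1) ∧
       (∀ x y p q : V, x ≠ y → p ≠ q → ({x, y} : Set V) ∩ {p, q} = ∅ →
          G.mCommon x y ≤ 1 → G.mCommon p q ≤ 1 →
          ∃ x' y' p' q' : V,
            ((x' = x ∧ y' = y) ∨ (x' = y ∧ y' = x)) ∧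
            ((p' = p ∧ q' = q) ∨ (p' = q ∧ q' = p)) ∧
            (G.ConfigI x' y' p' q' ∨ G.ConfigII x' y' p' q')) ∧
       (∀ x y z : V, x ≠ y → x ≠ z → y ≠ z →
          G.mCommon x y ≤ 1 → G.mCommon x z ≤ 1 → G.mCommon y z ≤ 1 →
          ((G.Adj x y ∧ G.Adj y z ∧ G.Adj x z) ∨ G.ConfigIV x y z))) :=
  rvd_eq_card_sub_one_iff_general G
end

section
/- For n ≥ 8, let G_0 be the tree of order n obtained from the star K_{1,n−2} by adding a new vertex adjacent to exactly one leaf of the star. Then the complement of G_0 is connected and rvd(complement of G_0) = n−1; hence the bound rvd(Ḡ) ≥ n−1 for trees G of order n ≥ 8 with connected complement is sharp. -/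
open SimpleGraph

/-- The tree of order `n` obtained from the star `K_{1,n-2}` (center `0`,
leaves `1, …, n-2`) by adding a new vertex `n-1` adjacent to exactly one leaf
(the leaf `1`). -/
def starPlusPendant (n : ℕ) : SimpleGraph (Fin n) :=
  SimpleGraph.fromRel fun u v =>
    ((u : ℕ) = 0 ∧ 1 ≤ (v : ℕ) ∧ (v : ℕ) ≤ n - 2) ∨ ((u : ℕ) = n - 1 ∧ (v : ℕ) = 1)

/-!
In `Ḡ₀` the vertex `0` is adjacent only to `n - 1`, the vertex `1` only to the leaves
`2, …, n - 2`, and those leaves form a clique joined to both `1` and `n - 1`. Hence no vertex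
sees both `0` and `1`, so colouring `v ↦ v - 1` (which gives `0` and `1` the same colour) makes
every neighbourhood rainbow; the neighbourhood of `x` is then a rainbow `x`–`y` cut.
Conversely, two adjacent leaves `x, y` have every other vertex of `1, …, n - 1` as a common
neighbour, and an `x`–`y` cut must contain all common neighbours. So one of the sets
`{1, …, n - 1} \ {x}`, `{1, …, n - 1} \ {y}` is rainbow; choosing `x, y` away from a colour
clash on `1, …, n - 1` shows that `n - 1` colours are needed.
-/

namespace SimpleGraph

variable {V α : Type*} {G : SimpleGraph V} {c : V → α}

theorem not_reachable_delVerts_of_neighborSet_subset {S : Set V} {x y : V} (hxy : x ≠ y)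
    (hS : G.neighborSet x ⊆ S) : ¬ (G.delVerts S).Reachable x y := by
  rintro ⟨_ | ⟨hadj, _⟩⟩
  · exact hxy rfl
  · exact hadj.2.2 (hS hadj.1)

theorem isRVDColoring_of_injOn_neighborSet (h : ∀ v, (G.neighborSet v).InjOn c) :
    G.IsRVDColoring c := by
  intro x y hxy
  by_cases hadj : G.Adj x y
  · refine ⟨G.neighborSet x \ {y}, fun hx => G.loopless.irrefl x hx.1, fun hy => hy.2 rfl,
      fun hnadj => absurd hadj hnadj, fun _ => ⟨?_, Or.inr ((h x).mono ?_)⟩⟩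
    · refine not_reachable_delVerts_of_neighborSet_subset hxy fun z hz => ?_
      obtain ⟨hxz, hne⟩ := deleteEdges_adj.mp hz
      exact ⟨hxz, fun hzy => hne (by rw [Set.mem_singleton_iff.mp hzy]; rfl)⟩
    · simpa [Set.insert_subset_iff] using hadj
  · exact ⟨G.neighborSet x, G.loopless.irrefl x, hadj,
      fun _ => ⟨not_reachable_delVerts_of_neighborSet_subset hxy subset_rfl, h x⟩,
      fun hadj' => absurd hadj' hadj⟩

/-- A common neighbour `z` of `x` and `y` lies in every `x`–`y` cut: otherwise `x z y` is a path
avoiding the edge `xy`. -/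
theorem IsRVDColoring.injOn_insert_commonNeighbors (hc : G.IsRVDColoring c) {x y : V}
    (hxy : G.Adj x y) :
    (insert x (G.commonNeighbors x y)).InjOn c ∨ (insert y (G.commonNeighbors x y)).InjOn c := by
  obtain ⟨S, hxS, hyS, -, hcut⟩ := hc x y hxy.ne
  obtain ⟨hnr, hinj⟩ := hcut hxy
  have hsub : G.commonNeighbors x y ⊆ S := by
    intro z hz
    obtain ⟨hxz, hyz⟩ := hz
    by_contra hzS
    have hxz' : ((G.deleteEdges {s(x, y)}).delVerts S).Adj x z :=
      ⟨deleteEdges_adj.mpr ⟨hxz, fun h => hyz.ne (Sym2.congr_right.mp h).symm⟩, hxS, hzS⟩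
    have hzy' : ((G.deleteEdges {s(x, y)}).delVerts S).Adj z y :=
      ⟨deleteEdges_adj.mpr ⟨hyz.symm, fun h => hxz.ne (Sym2.congr_left.mp h).symm⟩,
        hzS, hyS⟩
    exact hnr (hxz'.reachable.trans hzy'.reachable)
  rw [Set.union_singleton, Set.union_singleton] at hinj
  exact hinj.imp (·.mono (Set.insert_subset_insert hsub)) (·.mono (Set.insert_subset_insert hsub))

theorem rvd_eq_of_isRVDColoring {k : ℕ} (c : V → Fin k) (hc : G.IsRVDColoring c)
    (hmin : ∀ m (c' : V → Fin m), G.IsRVDColoring c' → k ≤ m) : G.rvd = k :=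
  le_antisymm (Nat.sInf_le ⟨c, hc⟩)
    (le_csInf ⟨k, c, hc⟩ fun m ⟨c', hc'⟩ => hmin m c' hc')

end SimpleGraph

theorem compl_starPlusPendant_adj {n : ℕ} {u v : Fin n} :
    (starPlusPendant n)ᶜ.Adj u v ↔ (u : ℕ) ≠ v ∧
      ¬((u : ℕ) = 0 ∧ 1 ≤ (v : ℕ) ∧ (v : ℕ) ≤ n - 2) ∧
      ¬((v : ℕ) = 0 ∧ 1 ≤ (u : ℕ) ∧ (u : ℕ) ≤ n - 2) ∧
      ¬((u : ℕ) = n - 1 ∧ (v : ℕ) = 1) ∧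
      ¬((v : ℕ) = n - 1 ∧ (u : ℕ) = 1) := by
  simp only [compl_adj, starPlusPendant, fromRel_adj, ne_eq, Fin.ext_iff]
  tauto

theorem connected_compl_starPlusPendant {n : ℕ} (hn : 4 ≤ n) :
    (starPlusPendant n)ᶜ.Connected := by
  let two : Fin n := ⟨2, by omega⟩
  have reach_two : ∀ w, (starPlusPendant n)ᶜ.Reachable w two := by
    intro w
    have hw := w.isLt
    by_cases hw0 : (w : ℕ) = 0
    · let last : Fin n := ⟨n - 1, by omega⟩
      have hw_last : (starPlusPendant n)ᶜ.Adj w last :=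
        compl_starPlusPendant_adj.mpr (by simp only [last]; omega)
      have hlast_two : (starPlusPendant n)ᶜ.Adj last two :=
        compl_starPlusPendant_adj.mpr (by simp only [two, last]; omega)
      exact hw_last.reachable.trans hlast_two.reachable
    by_cases hw2 : (w : ℕ) = 2
    · rw [show w = two from Fin.ext hw2]
    exact (compl_starPlusPendant_adj.mpr (by simp only [two]; omega)).reachable
  have : Nonempty (Fin n) := ⟨two⟩
  exact (connected_iff _).mpr ⟨fun u v => (reach_two u).trans (reach_two v).symm, inferInstance⟩

theorem mem_commonNeighbors_compl_starPlusPendant {n : ℕ} {x y z : Fin n}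
    (hx : 2 ≤ (x : ℕ) ∧ (x : ℕ) ≤ n - 2) (hy : 2 ≤ (y : ℕ) ∧ (y : ℕ) ≤ n - 2)
    (hz : 1 ≤ (z : ℕ)) (hzx : z ≠ x) (hzy : z ≠ y) :
    z ∈ (starPlusPendant n)ᶜ.commonNeighbors x y := by
  rw [Fin.ne_iff_vne] at hzx hzy
  exact ⟨compl_starPlusPendant_adj.mpr (by omega), compl_starPlusPendant_adj.mpr (by omega)⟩

theorem le_of_isRVDColoring_compl_starPlusPendant {n k : ℕ} (hn : 7 ≤ n) {c : Fin n → Fin k}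
    (hc : (starPlusPendant n)ᶜ.IsRVDColoring c) : n - 1 ≤ k := by
  by_contra! hk
  obtain ⟨a, b, hab, hcab, ha, hb⟩ :
      ∃ a b : Fin n, a ≠ b ∧ c a = c b ∧ 1 ≤ (a : ℕ) ∧ 1 ≤ (b : ℕ) := by
    obtain ⟨i, j, hij, hcij⟩ := Fintype.exists_ne_map_eq_of_card_lt
      (fun i : Fin (n - 1) => c ⟨i + 1, by omega⟩) (by simpa using hk)
    exact ⟨_, _, fun h => hij (Fin.ext (by simpa using h)), hcij, by simp, by simp⟩
  obtain ⟨x, y, hxy, hx, hy, hax, hbx, hay, hby⟩ : ∃ x y : Fin n, x ≠ y ∧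
      (2 ≤ (x : ℕ) ∧ (x : ℕ) ≤ n - 2) ∧ (2 ≤ (y : ℕ) ∧ (y : ℕ) ≤ n - 2) ∧
      a ≠ x ∧ b ≠ x ∧ a ≠ y ∧ b ≠ y := by
    have hleaves : 1 < (Finset.Icc 2 5 \ {(a : ℕ), (b : ℕ)}).card := by
      have := Finset.le_card_sdiff {(a : ℕ), (b : ℕ)} (Finset.Icc 2 5)
      have := Finset.card_le_two (a := (a : ℕ)) (b := (b : ℕ))
      simp only [Nat.card_Icc] at *
      omega
    obtain ⟨x, hx, y, hy, hxy⟩ := Finset.one_lt_card.mp hleaves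
    simp only [Finset.mem_sdiff, Finset.mem_Icc, Finset.mem_insert, Finset.mem_singleton,
      not_or] at hx hy
    refine ⟨⟨x, by omega⟩, ⟨y, by omega⟩, ?_⟩
    simp only [ne_eq, Fin.ext_iff]
    omega
  have hadj : (starPlusPendant n)ᶜ.Adj x y :=
    compl_starPlusPendant_adj.mpr (by rw [Fin.ne_iff_vne] at hxy; omega)
  have ha' := mem_commonNeighbors_compl_starPlusPendant hx hy ha hax hay
  have hb' := mem_commonNeighbors_compl_starPlusPendant hx hy hb hbx hby
  rcases hc.injOn_insert_commonNeighbors hadj with hinj | hinj <;>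
    exact hab (hinj (Or.inr ha') (Or.inr hb') hcab)

/-- The truncated subtraction `0 - 1 = 0` gives the vertices `0` and `1` the same colour. -/
def predColoring (n : ℕ) : Fin (n + 2) → Fin (n + 1) := fun v => ⟨v - 1, by omega⟩

theorem injOn_predColoring_neighborSet (n : ℕ) (v : Fin (n + 2)) :
    ((starPlusPendant (n + 2))ᶜ.neighborSet v).InjOn (predColoring n) := by
  intro a ha b hb hab
  have hab' : (a : ℕ) - 1 = b - 1 := congrArg Fin.val hab
  rw [mem_neighborSet, compl_starPlusPendant_adj] at ha hb
  exact Fin.ext (by omega)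

/-- For `n ≥ 8`, the complement of the tree `G₀` obtained from `K_{1,n-2}` by
adding a new vertex adjacent to one leaf is connected and has
`rvd(Ḡ₀) = n - 1`; hence the lower bound `rvd(Ḡ) ≥ n - 1` for trees of order
`n ≥ 8` is sharp. -/
theorem rvd_compl_starPlusPendant (n : ℕ) (hn : 8 ≤ n) :
    (starPlusPendant n)ᶜ.Connected ∧ (starPlusPendant n)ᶜ.rvd = n - 1 := by
  refine ⟨connected_compl_starPlusPendant (by omega), ?_⟩
  obtain ⟨m, rfl⟩ : ∃ m, n = m + 2 := ⟨n - 2, by omega⟩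
  exact rvd_eq_of_isRVDColoring (predColoring m)
    (isRVDColoring_of_injOn_neighborSet (injOn_predColoring_neighborSet m))
    fun k _ hc => le_of_isRVDColoring_compl_starPlusPendant (by omega) hc
end
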